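/- For positive semidefinite matrices A, B, the Powers–Størmer-type inequality ‖A^{1/2} − B^{1/2}‖_F² ≤ ‖A − B‖_{S1} (trace norm) holds, where ‖M‖_{S1} = Tr((MᵀM)^{1/2}). -/

import Mathlib

open Matrix
open scoped Classical

/-- The positive semidefinite square root of a matrix (and `0` if the matrix is not
positive semidefinite). -/
noncomputable def msqrt {d : ℕ} (A : Matrix (Fin d) (Fin d) ℝ) : Matrix (Fin d) (Fin d) ℝ :=
  if h : A.PosSemidef then
    h.1.eigenvectorUnitary.1 * diagonal (((↑) : ℝ → ℝ) ∘ (Real.sqrt ∘ h.1.eigenvalues)) *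
      (star h.1.eigenvectorUnitary : Matrix (Fin d) (Fin d) ℝ)
  else 0

/-- Squared Frobenius (Hilbert–Schmidt) norm `‖M‖_F² = Tr(MᵀM)`. -/
noncomputable def frobSq {d : ℕ} (M : Matrix (Fin d) (Fin d) ℝ) : ℝ := (Mᵀ * M).trace

/-!
Put `P = √A`, `Q = √B`, `D = P - Q` and `S = P + Q`. Then `DS + SD = 2(A - B)` and
`-S ≤ D ≤ S`. In an orthonormal eigenbasis of `D`, with eigenvalues `λᵢ`, the diagonal entries
satisfy `(A - B)ᵢᵢ = λᵢ Sᵢᵢ` and `|λᵢ| ≤ Sᵢᵢ`, hence `λᵢ² ≤ |(A - B)ᵢᵢ| ≤ |A - B|ᵢᵢ`, the last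
step because `-|A - B| ≤ A - B ≤ |A - B|`. Summing over `i` gives `Tr D² ≤ Tr |A - B|`.
-/

open scoped MatrixOrder

lemma msqrt_eq_cfcSqrt {d : ℕ} {A : Matrix (Fin d) (Fin d) ℝ} (hA : A.PosSemidef) :
    msqrt A = CFC.sqrt A := by
  rw [CFC.sqrt_eq_real_sqrt A hA.nonneg, cfcₙ_eq_cfc, hA.1.cfc_eq, IsHermitian.cfc,
    Unitary.conjStarAlgAut_apply, msqrt, dif_pos hA]
  rfl

lemma msqrt_transpose_mul_self {d : ℕ} (M : Matrix (Fin d) (Fin d) ℝ) :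
    msqrt (Mᵀ * M) = CFC.abs M := by
  rw [CFC.abs, star_eq_conjTranspose, conjTranspose_eq_transpose_of_trivial,
    msqrt_eq_cfcSqrt]
  simpa using posSemidef_conjTranspose_mul_self M

namespace Matrix

lemma abs_diag_le_of_posSemidef_sub_of_posSemidef_add {n : Type*} {M R : Matrix n n ℝ}
    (hsub : (R - M).PosSemidef) (hadd : (R + M).PosSemidef) (i : n) : |M i i| ≤ R i i := by
  have h₁ := hsub.diag_nonneg (i := i)
  have h₂ := hadd.diag_nonneg (i := i)
  simp only [sub_apply, add_apply] at h₁ h₂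
  exact abs_le.2 ⟨by linarith, by linarith⟩

variable {n : Type*} [Fintype n] [DecidableEq n]

lemma sq_le_diag_of_diagonal_anticommutator {μ : n → ℝ} {S M R : Matrix n n ℝ}
    (hS₁ : (S - diagonal μ).PosSemidef) (hS₂ : (S + diagonal μ).PosSemidef)
    (hM : diagonal μ * S + S * diagonal μ = M + M)
    (hR₁ : (R - M).PosSemidef) (hR₂ : (R + M).PosSemidef) (i : n) : μ i ^ 2 ≤ R i i := by
  have hμS : |μ i| ≤ S i i := by
    simpa using abs_diag_le_of_posSemidef_sub_of_posSemidef_add hS₁ hS₂ i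
  have hMii : M i i = μ i * S i i := by
    have := congrFun₂ hM i i
    simp only [add_apply, diagonal_mul, mul_diagonal] at this
    linarith
  calc μ i ^ 2 = |μ i| * |μ i| := by rw [abs_mul_abs_self, sq]
    _ ≤ |μ i| * S i i := mul_le_mul_of_nonneg_left hμS (abs_nonneg _)
    _ = |M i i| := by rw [hMii, abs_mul, abs_of_nonneg ((abs_nonneg _).trans hμS)]
    _ ≤ R i i := abs_diag_le_of_posSemidef_sub_of_posSemidef_add hR₁ hR₂ i

lemma trace_mul_self_le_of_anticommutator {D S M R : Matrix n n ℝ} (hD : D.IsHermitian)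
    (hS₁ : (S - D).PosSemidef) (hS₂ : (S + D).PosSemidef) (hM : D * S + S * D = M + M)
    (hR₁ : (R - M).PosSemidef) (hR₂ : (R + M).PosSemidef) : (D * D).trace ≤ R.trace := by
  set U := star hD.eigenvectorUnitary
  set φ := Unitary.conjStarAlgAut ℝ (Matrix n n ℝ) U
  have hφD : φ D = diagonal hD.eigenvalues := by
    simpa [φ, U] using hD.conjStarAlgAut_star_eigenvectorUnitary
  have hφ_trace (X : Matrix n n ℝ) : (φ X).trace = X.trace := by
    rw [Unitary.conjStarAlgAut_apply, trace_mul_cycle, Unitary.coe_star_mul_self, one_mul]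
  have hφ_psd {X : Matrix n n ℝ} (hX : X.PosSemidef) : (φ X).PosSemidef := by
    simpa [φ, star_eq_conjTranspose] using hX.mul_mul_conjTranspose_same (U : Matrix n n ℝ)
  have key := sq_le_diag_of_diagonal_anticommutator (S := φ S) (M := φ M) (R := φ R)
    (by simpa [hφD] using hφ_psd hS₁) (by simpa [hφD] using hφ_psd hS₂)
    (by simpa [hφD] using congrArg φ hM) (by simpa using hφ_psd hR₁) (by simpa using hφ_psd hR₂)
  calc (D * D).trace = (φ (D * D)).trace := (hφ_trace _).symm
    _ = ∑ i, hD.eigenvalues i ^ 2 := by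
      simp [map_mul, hφD, diagonal_mul_diagonal, trace_diagonal, sq]
    _ ≤ ∑ i, φ R i i := Finset.sum_le_sum fun i _ => key i
    _ = R.trace := hφ_trace R

end Matrix

/-- Powers–Størmer inequality: for positive semidefinite matrices `A`, `B`,
`‖A^{1/2} − B^{1/2}‖_F² ≤ ‖A − B‖_{S1}` where `‖M‖_{S1} = Tr((MᵀM)^{1/2})`. -/
theorem powers_stormer {d : ℕ} (A B : Matrix (Fin d) (Fin d) ℝ)
    (hA : A.PosSemidef) (hB : B.PosSemidef) :
    frobSq (msqrt A - msqrt B) ≤ (msqrt ((A - B)ᵀ * (A - B))).trace := by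
  rw [frobSq, msqrt_eq_cfcSqrt hA, msqrt_eq_cfcSqrt hB, msqrt_transpose_mul_self]
  set P := CFC.sqrt A
  set Q := CFC.sqrt B
  have hP : P.PosSemidef := (CFC.sqrt_nonneg A).posSemidef
  have hQ : Q.PosSemidef := (CFC.sqrt_nonneg B).posSemidef
  have hD : (P - Q).IsHermitian := hP.1.sub hQ.1
  have hAB : A - B = P * P - Q * Q := by
    rw [CFC.sqrt_mul_sqrt_self A hA.nonneg, CFC.sqrt_mul_sqrt_self B hB.nonneg]
  rw [← conjTranspose_eq_transpose_of_trivial, hD.eq]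
  refine trace_mul_self_le_of_anticommutator (S := P + Q) (M := A - B) hD ?_ ?_ ?_ ?_ ?_
  · simpa using hQ.add hQ
  · simpa [← two_smul ℝ] using hP.smul zero_le_two
  · rw [hAB]; noncomm_ring
  · rw [CFC.abs_sub_self (A - B)]
    exact (smul_nonneg zero_le_two (CFC.negPart_nonneg _)).posSemidef
  · rw [CFC.abs_add_self (A - B)]
    exact (smul_nonneg zero_le_two (CFC.posPart_nonneg _)).posSemidef
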